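/- Let x₁, x₂, x₃ be elements of a complex unital Banach algebra A satisfying x₁x₂ + x₁x₃ + x₂x₃ = α₁·1 + α₂(x₁ + x₂ + x₃) and x₁x₂x₃ = β(x₁ + x₂ + x₃), where α₁, α₂, β ∈ ℂ with β ≠ 0. If x₁, x₂ and x₁ + x₂ + x₃ are all generalized Drazin invertible, then x₃ is generalized Drazin invertible. -/

import Mathlib

/-- `b` is a generalized Drazin inverse of `a`: `a` commutes with `b`, `b` is inner-inverse
to itself relative to `a`, and `a * (1 - a * b)` is quasinilpotent (spectral radius zero). -/
def IsGDrazinInverse {A : Type*} [NormedRing A] [NormedAlgebra ℂ A] (a b : A) : Prop :=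
  a * b = b * a ∧ b * a * b = b ∧ spectralRadius ℂ (a * (1 - a * b)) = 0

/-- `a` is generalized Drazin invertible. -/
def GDrazinInvertible {A : Type*} [NormedRing A] [NormedAlgebra ℂ A] (a : A) : Prop :=
  ∃ b : A, IsGDrazinInverse a b

/-!
`a` is g-Drazin invertible iff `0` is not an accumulation point of its spectrum. Given a g-Drazin
inverse `b`, an inverse of `z - a` for small `z ≠ 0` is glued from `(1 - z b)⁻¹ b` and the
resolvent of the quasinilpotent part `a (1 - a b)`. Conversely, over a small circle around `0`,
`P = (2πi)⁻¹ ∮ (z - a)⁻¹ dz` is the spectral idempotent at `0` and `-(2πi)⁻¹ ∮ z⁻¹ (z - a)⁻¹ dz`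
is a g-Drazin inverse. The identities `P² = P` and `b P = 0` come from the resolvent identity,
which makes `(w - a)⁻¹ (1 - P)` a Cauchy integral in `w`, hence holomorphic across `w = 0`.

For the theorem, the two relations give
`(z - x₁) (z - x₂) (z - x₃) = q(z) (μ(z) - (x₁ + x₂ + x₃))` with `q(z) = z² - α₂ z + β` and
`μ(z) = (z³ + α₁ z) / q(z)`. As `β ≠ 0`, `μ` maps a punctured neighbourhood of `0` into one, so
for small `z ≠ 0` every factor but `z - x₃` is invertible, hence so is `z - x₃`.
-/

open Complex Metric Filter Topology
open scoped Real NNReal ENNReal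

section Resolvent

variable {A : Type*} [NormedRing A] [NormedAlgebra ℂ A] {a : A} {z w : ℂ}

lemma mul_resolvent (hz : z ∈ resolventSet ℂ a) : a * resolvent a z = z • resolvent a z - 1 := by
  have h := hz.mul_val_inv
  rw [← spectrum.resolvent_eq hz, Algebra.algebraMap_eq_smul_one, sub_mul, smul_one_mul] at h
  rw [← h, sub_sub_cancel]

lemma resolvent_mul (hz : z ∈ resolventSet ℂ a) : resolvent a z * a = z • resolvent a z - 1 := by
  have h := hz.val_inv_mul
  rw [← spectrum.resolvent_eq hz, Algebra.algebraMap_eq_smul_one, mul_sub, mul_smul_one] at h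
  rw [← h, sub_sub_cancel]

lemma commute_resolvent (hz : z ∈ resolventSet ℂ a) : Commute a (resolvent a z) :=
  (mul_resolvent hz).trans (resolvent_mul hz).symm

lemma resolvent_mul_resolvent (hz : z ∈ resolventSet ℂ a) (hw : w ∈ resolventSet ℂ a)
    (hzw : z ≠ w) :
    resolvent a w * resolvent a z = (z - w)⁻¹ • (resolvent a w - resolvent a z) := by
  have hz' : z • resolvent a z = a * resolvent a z + 1 := by rw [mul_resolvent hz, sub_add_cancel]
  have hw' : w • resolvent a w = resolvent a w * a + 1 := by rw [resolvent_mul hw, sub_add_cancel]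
  rw [eq_inv_smul_iff₀ (sub_ne_zero.mpr hzw), sub_smul, ← mul_smul_comm, ← smul_mul_assoc, hz',
    hw']
  noncomm_ring

lemma differentiableOn_resolvent [CompleteSpace A] :
    DifferentiableOn ℂ (resolvent a) (resolventSet ℂ a) := fun _ hz =>
  (spectrum.hasDerivAt_resolvent_const_left hz).differentiableAt.differentiableWithinAt

end Resolvent

section CircleIntegral

variable {E F : Type*} [NormedAddCommGroup E] [NormedSpace ℂ E] [CompleteSpace E]
  [NormedAddCommGroup F] [NormedSpace ℂ F] [CompleteSpace F]

lemma ContinuousLinearMap.circleIntegral_comp_comm (L : E →L[ℂ] F) {f : ℂ → E} {c : ℂ} {R : ℝ}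
    (hf : CircleIntegrable f c R) : ∮ z in C(c, R), L (f z) = L (∮ z in C(c, R), f z) := by
  simp only [circleIntegral, ← L.map_smul]
  exact L.intervalIntegral_comp_comm hf.out

lemma differentiableOn_cauchyIntegral {f : ℂ → E} {c : ℂ} {R : ℝ} (hf : CircleIntegrable f c R) :
    DifferentiableOn ℂ (fun w => (2 * π * I : ℂ)⁻¹ • ∮ z in C(c, R), (z - w)⁻¹ • f z)
      (ball c R) := by
  rcases le_or_gt R 0 with hR | hR
  · rw [ball_eq_empty.mpr hR]
    exact differentiableOn_empty
  lift R to ℝ≥0 using hR.le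
  rw [← eball_coe]
  exact (hasFPowerSeriesOn_cauchy_integral hf hR).differentiableOn

variable {A : Type*} [NormedRing A] [NormedAlgebra ℂ A] [CompleteSpace A] {f : ℂ → A} {c : ℂ}
  {R : ℝ}

lemma mul_circleIntegral (x : A) (hf : CircleIntegrable f c R) :
    x * ∮ z in C(c, R), f z = ∮ z in C(c, R), x * f z :=
  ((ContinuousLinearMap.mul ℂ A x).circleIntegral_comp_comm hf).symm

lemma circleIntegral_mul (x : A) (hf : CircleIntegrable f c R) :
    (∮ z in C(c, R), f z) * x = ∮ z in C(c, R), f z * x :=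
  (((ContinuousLinearMap.mul ℂ A).flip x).circleIntegral_comp_comm hf).symm

lemma Commute.circleIntegral_right {x : A} (hf : CircleIntegrable f c R) (hR : 0 ≤ R)
    (h : ∀ z ∈ sphere c R, Commute x (f z)) : Commute x (∮ z in C(c, R), f z) := by
  rw [Commute, SemiconjBy, mul_circleIntegral x hf, circleIntegral_mul x hf]
  exact circleIntegral.integral_congr hR h

end CircleIntegral

section SpectralRadius

variable {A : Type*} [NormedRing A] [NormedAlgebra ℂ A] [CompleteSpace A]

lemma spectralRadius_le_of_eventually_norm_pow_le {x : A} {ρ : ℝ≥0}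
    (h : ∀ᶠ n in atTop, ‖x ^ n‖ ≤ ρ ^ n) : spectralRadius ℂ x ≤ ρ := by
  refine (spectrum.spectralRadius_le_liminf_pow_nnnorm_pow_one_div ℂ x).trans
    (liminf_le_of_frequently_le' ((h.and (eventually_ne_atTop 0)).frequently.mono ?_))
  rintro n ⟨hn, hn0⟩
  have : (‖x ^ n‖₊ : ℝ≥0∞) ≤ (ρ : ℝ≥0∞) ^ n := by exact_mod_cast hn
  calc (‖x ^ n‖₊ : ℝ≥0∞) ^ (1 / n : ℝ) ≤ ((ρ : ℝ≥0∞) ^ n) ^ (1 / n : ℝ) :=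
        ENNReal.rpow_le_rpow this (by positivity)
    _ = ρ := by rw [one_div, ENNReal.pow_rpow_inv_natCast hn0]

lemma spectralRadius_eq_zero_of_eventually_norm_pow_le {x : A}
    (h : ∀ᶠ ρ in 𝓝[>] (0 : ℝ), ∃ C, ∀ᶠ n in atTop, ‖x ^ n‖ ≤ C * ρ ^ n) :
    spectralRadius ℂ x = 0 := by
  refine le_antisymm (ENNReal.le_of_forall_pos_le_add fun δ hδ _ => ?_) zero_le
  obtain ⟨ρ, ⟨C, hC⟩, hρ0, hρδ⟩ := (h.and (Ioo_mem_nhdsGT (half_pos hδ))).exists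
  rw [zero_add]
  refine spectralRadius_le_of_eventually_norm_pow_le ?_
  filter_upwards [hC, (tendsto_pow_atTop_atTop_of_one_lt one_lt_two).eventually_ge_atTop C]
    with n hn hCn
  calc ‖x ^ n‖ ≤ C * ρ ^ n := hn
    _ ≤ 2 ^ n * (δ / 2) ^ n := by gcongr; exact hρδ.le
    _ = (δ : ℝ) ^ n := by rw [← mul_pow, mul_div_cancel₀ _ two_ne_zero]

end SpectralRadius

lemma closedBall_sdiff_ball_subset_ball_inter_compl {r R ε : ℝ} (hr : 0 < r) (hR : R < ε) :
    closedBall (0 : ℂ) R \ ball 0 r ⊆ ball 0 ε ∩ {0}ᶜ := by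
  rintro z ⟨hzR, hzr⟩
  simp only [mem_closedBall, mem_ball, dist_zero_right, not_lt] at hzR hzr
  exact ⟨mem_ball_zero_iff.mpr (hzR.trans_lt hR), norm_pos_iff.mp (hr.trans_le hzr)⟩

lemma sphere_subset_ball_inter_compl {r ε : ℝ} (hr : 0 < r) (hrε : r < ε) :
    sphere (0 : ℂ) r ⊆ ball 0 ε ∩ {0}ᶜ := by
  rw [← closedBall_sdiff_ball]
  exact closedBall_sdiff_ball_subset_ball_inter_compl hr hrε

noncomputable section ResolventMoment

variable {A : Type*} [NormedRing A] [NormedAlgebra ℂ A] [CompleteSpace A]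

/-- The coefficient of `z ^ (-n - 1)` in the Laurent expansion of `resolvent a` around `0`, computed
on the circle of radius `r`. -/
def resolventMoment (a : A) (r : ℝ) (n : ℤ) : A :=
  (2 * π * I : ℂ)⁻¹ • ∮ z in C(0, r), z ^ n • resolvent a z

variable {a : A} {ε r : ℝ}

lemma differentiableOn_zpow_smul_resolvent (ha : ball (0 : ℂ) ε ∩ {0}ᶜ ⊆ resolventSet ℂ a)
    (n : ℤ) :
    DifferentiableOn ℂ (fun z : ℂ => z ^ n • resolvent a z) (ball 0 ε ∩ {0}ᶜ) := fun _ hz =>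
  (differentiableAt_zpow.mpr (Or.inl hz.2)).differentiableWithinAt.smul
    ((differentiableOn_resolvent _ (ha hz)).mono ha)

lemma circleIntegrable_zpow_smul_resolvent (ha : ball (0 : ℂ) ε ∩ {0}ᶜ ⊆ resolventSet ℂ a)
    (hr : 0 < r) (hrε : r < ε) (n : ℤ) :
    CircleIntegrable (fun z : ℂ => z ^ n • resolvent a z) 0 r :=
  ((differentiableOn_zpow_smul_resolvent ha n).continuousOn.mono
    (sphere_subset_ball_inter_compl hr hrε)).circleIntegrable hr.le

lemma circleIntegrable_resolvent (ha : ball (0 : ℂ) ε ∩ {0}ᶜ ⊆ resolventSet ℂ a) (hr : 0 < r)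
    (hrε : r < ε) : CircleIntegrable (resolvent a) 0 r :=
  (differentiableOn_resolvent.continuousOn.mono
    ((sphere_subset_ball_inter_compl hr hrε).trans ha)).circleIntegrable hr.le

lemma resolventMoment_eq_of_le (ha : ball (0 : ℂ) ε ∩ {0}ᶜ ⊆ resolventSet ℂ a)
    {R : ℝ} (hr : 0 < r) (hrR : r ≤ R) (hR : R < ε) (n : ℤ) :
    resolventMoment a R n = resolventMoment a r n := by
  have hsub := closedBall_sdiff_ball_subset_ball_inter_compl hr hR
  rw [resolventMoment, resolventMoment,
    Complex.circleIntegral_eq_of_differentiable_on_annulus_off_countable hr hrR Set.countable_empty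
      ((differentiableOn_zpow_smul_resolvent ha n).continuousOn.mono hsub)
      fun z hz => (differentiableOn_zpow_smul_resolvent ha n).differentiableAt
        ((isOpen_ball.inter isOpen_compl_singleton).mem_nhds
          (hsub ⟨ball_subset_closedBall hz.1.1, fun h => hz.1.2 (ball_subset_closedBall h)⟩))]

lemma mul_resolventMoment (ha : ball (0 : ℂ) ε ∩ {0}ᶜ ⊆ resolventSet ℂ a)
    (hr : 0 < r) (hrε : r < ε) (n : ℤ) :
    a * resolventMoment a r n =
      resolventMoment a r (n + 1) - (2 * π * I : ℂ)⁻¹ • (∮ z in C(0, r), z ^ n) • (1 : A) := by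
  have hsub := sphere_subset_ball_inter_compl hr hrε
  have hpt : Set.EqOn (fun z : ℂ => a * (z ^ n • resolvent a z))
      (fun z => z ^ (n + 1) • resolvent a z - z ^ n • (1 : A)) (sphere 0 r) := fun z hz => by
    simp only [mul_smul_comm, mul_resolvent (ha (hsub hz)), smul_sub, smul_smul,
      zpow_add_one₀ (hsub hz).2]
  have hint : CircleIntegrable (fun z : ℂ => z ^ n • (1 : A)) 0 r :=
    (((continuousOn_zpow₀ n).mono fun _ hz => (hsub hz).2).smul
      continuousOn_const).circleIntegrable hr.le
  rw [resolventMoment, mul_smul_comm,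
    mul_circleIntegral a (circleIntegrable_zpow_smul_resolvent ha hr hrε n),
    circleIntegral.integral_congr hr.le hpt,
    circleIntegral.integral_sub (circleIntegrable_zpow_smul_resolvent ha hr hrε (n + 1)) hint,
    circleIntegral.integral_smul_const, smul_sub, resolventMoment]

lemma mul_resolventMoment_of_ne (ha : ball (0 : ℂ) ε ∩ {0}ᶜ ⊆ resolventSet ℂ a)
    (hr : 0 < r) (hrε : r < ε) {n : ℤ} (hn : n ≠ -1) :
    a * resolventMoment a r n = resolventMoment a r (n + 1) := by
  have h := circleIntegral.integral_sub_zpow_of_ne hn 0 0 r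
  simp only [sub_zero] at h
  rw [mul_resolventMoment ha hr hrε, h, zero_smul, smul_zero, sub_zero]

lemma mul_resolventMoment_neg_one (ha : ball (0 : ℂ) ε ∩ {0}ᶜ ⊆ resolventSet ℂ a)
    (hr : 0 < r) (hrε : r < ε) :
    a * resolventMoment a r (-1) = resolventMoment a r 0 - 1 := by
  have h := circleIntegral.integral_sub_center_inv (0 : ℂ) hr.ne'
  simp only [sub_zero] at h
  simp only [mul_resolventMoment ha hr hrε, neg_add_cancel, zpow_neg_one, h, smul_smul,
    inv_mul_cancel₀ two_pi_I_ne_zero, one_smul]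

lemma commute_resolventMoment (ha : ball (0 : ℂ) ε ∩ {0}ᶜ ⊆ resolventSet ℂ a)
    (hr : 0 < r) (hrε : r < ε) (n : ℤ) :
    Commute a (resolventMoment a r n) :=
  (Commute.circleIntegral_right (circleIntegrable_zpow_smul_resolvent ha hr hrε n) hr.le
    fun _ hz => (commute_resolvent (ha (sphere_subset_ball_inter_compl hr hrε hz))).smul_right
      _).smul_right _

lemma pow_mul_resolventMoment_zero (ha : ball (0 : ℂ) ε ∩ {0}ᶜ ⊆ resolventSet ℂ a)
    (hr : 0 < r) (hrε : r < ε) (n : ℕ) :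
    a ^ n * resolventMoment a r 0 = resolventMoment a r n := by
  induction n with
  | zero => simp
  | succ n ih =>
    rw [pow_succ', mul_assoc, ih, mul_resolventMoment_of_ne ha hr hrε (by omega)]
    push_cast
    rfl

lemma exists_norm_resolventMoment_le (ha : ball (0 : ℂ) ε ∩ {0}ᶜ ⊆ resolventSet ℂ a)
    (hr : 0 < r) (hrε : r < ε) :
    ∃ C, ∀ n : ℕ, ‖resolventMoment a r n‖ ≤ C * r ^ n := by
  obtain ⟨K, hK⟩ := (isCompact_sphere (0 : ℂ) r).exists_bound_of_continuousOn
    (differentiableOn_resolvent.continuousOn.mono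
      ((sphere_subset_ball_inter_compl hr hrε).trans ha))
  refine ⟨‖(2 * π * I : ℂ)⁻¹‖ * (2 * π * r * K), fun n => ?_⟩
  have hint : ‖∮ z in C(0, r), z ^ (n : ℤ) • resolvent a z‖ ≤ 2 * π * r * (r ^ n * K) := by
    refine circleIntegral.norm_integral_le_of_norm_le_const hr.le fun z hz => ?_
    rw [norm_smul, zpow_natCast, norm_pow, mem_sphere_zero_iff_norm.mp hz]
    exact mul_le_mul_of_nonneg_left (hK z hz) (by positivity)
  calc ‖resolventMoment a r n‖ ≤ ‖(2 * π * I : ℂ)⁻¹‖ * (2 * π * r * (r ^ n * K)) :=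
        (norm_smul_le _ _).trans (mul_le_mul_of_nonneg_left hint (norm_nonneg _))
    _ = _ := by ring

lemma resolvent_mul_one_sub_resolventMoment_zero
    (ha : ball (0 : ℂ) ε ∩ {0}ᶜ ⊆ resolventSet ℂ a) (hr : 0 < r) (hrε : r < ε) {w : ℂ}
    (hw : w ∈ ball 0 r) (hw0 : w ≠ 0) :
    resolvent a w * (1 - resolventMoment a r 0) =
      (2 * π * I : ℂ)⁻¹ • ∮ z in C(0, r), (z - w)⁻¹ • resolvent a z := by
  have hsub := sphere_subset_ball_inter_compl hr hrε
  have hwε : w ∈ resolventSet ℂ a := ha ⟨ball_subset_ball hrε.le hw, hw0⟩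
  have hzw : ∀ z ∈ sphere (0 : ℂ) r, z - w ≠ 0 := fun z hz => sub_ne_zero.mpr fun h => by
    rw [h, mem_sphere_zero_iff_norm] at hz
    exact (mem_ball_zero_iff.mp hw).ne hz
  have hinv : ContinuousOn (fun z : ℂ => (z - w)⁻¹) (sphere 0 r) :=
    (continuousOn_id.sub continuousOn_const).inv₀ hzw
  have hpt : Set.EqOn (fun z => resolvent a w * (z ^ (0 : ℤ) • resolvent a z))
      (fun z => (z - w)⁻¹ • resolvent a w - (z - w)⁻¹ • resolvent a z) (sphere 0 r) :=
    fun z hz => by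
      dsimp only
      rw [zpow_zero, one_smul, ← smul_sub]
      exact resolvent_mul_resolvent (ha (hsub hz)) hwε (sub_ne_zero.mp (hzw z hz))
  have hint₁ : CircleIntegrable (fun z => (z - w)⁻¹ • resolvent a w) 0 r :=
    (hinv.smul continuousOn_const).circleIntegrable hr.le
  have hint₂ : CircleIntegrable (fun z => (z - w)⁻¹ • resolvent a z) 0 r :=
    (hinv.smul (differentiableOn_resolvent.continuousOn.mono (hsub.trans ha))).circleIntegrable
      hr.le
  rw [mul_sub, mul_one, resolventMoment, mul_smul_comm,
    mul_circleIntegral _ (circleIntegrable_zpow_smul_resolvent ha hr hrε 0),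
    circleIntegral.integral_congr hr.le hpt, circleIntegral.integral_sub hint₁ hint₂,
    circleIntegral.integral_smul_const, circleIntegral.integral_sub_inv_of_mem_ball hw, smul_sub,
    smul_smul, inv_mul_cancel₀ two_pi_I_ne_zero, one_smul, sub_sub_cancel]

lemma resolventMoment_mul_one_sub (ha : ball (0 : ℂ) ε ∩ {0}ᶜ ⊆ resolventSet ℂ a) {r₁ r₂ : ℝ}
    (hr₁ : 0 < r₁) (hr₁₂ : r₁ < r₂) (hr₂ : r₂ < ε) (n : ℤ) :
    resolventMoment a r₁ n * (1 - resolventMoment a r₂ 0) =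
      (2 * π * I : ℂ)⁻¹ • ∮ w in C(0, r₁), w ^ n •
        ((2 * π * I : ℂ)⁻¹ • ∮ z in C(0, r₂), (z - w)⁻¹ • resolvent a z) := by
  rw [resolventMoment, smul_mul_assoc,
    circleIntegral_mul _ (circleIntegrable_zpow_smul_resolvent ha hr₁ (hr₁₂.trans hr₂) n)]
  refine congrArg _ (circleIntegral.integral_congr hr₁.le fun w hw => ?_)
  have hw' := sphere_subset_ball_inter_compl hr₁ hr₁₂ hw
  rw [smul_mul_assoc,
    resolvent_mul_one_sub_resolventMoment_zero ha (hr₁.trans hr₁₂) hr₂ hw'.1 hw'.2]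

lemma resolventMoment_zero_mul_self (ha : ball (0 : ℂ) ε ∩ {0}ᶜ ⊆ resolventSet ℂ a)
    (hr : 0 < r) (hrε : r < ε) :
    resolventMoment a r 0 * resolventMoment a r 0 = resolventMoment a r 0 := by
  have hG := (differentiableOn_cauchyIntegral
    (circleIntegrable_resolvent ha hr hrε)).diffContOnCl_ball
      (closedBall_subset_ball (half_lt_self hr))
  have h := resolventMoment_mul_one_sub ha (half_pos hr) (half_lt_self hr) hrε 0
  simp only [zpow_zero, one_smul] at h
  rw [hG.circleIntegral_eq_zero (half_pos hr).le, smul_zero,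
    ← resolventMoment_eq_of_le ha (half_pos hr) (half_lt_self hr).le hrε, mul_sub, mul_one,
    sub_eq_zero] at h
  exact h.symm

lemma resolventMoment_neg_one_mul_zero (ha : ball (0 : ℂ) ε ∩ {0}ᶜ ⊆ resolventSet ℂ a)
    (hr : 0 < r) (hrε : r < ε) :
    resolventMoment a r (-1) * resolventMoment a r 0 = 0 := by
  have hG := (differentiableOn_cauchyIntegral
    (circleIntegrable_resolvent ha hr hrε)).diffContOnCl_ball
      (closedBall_subset_ball (half_lt_self hr))
  have h := resolventMoment_mul_one_sub ha (half_pos hr) (half_lt_self hr) hrε (-1)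
  have hcauchy := hG.two_pi_i_inv_smul_circleIntegral_sub_inv_smul (mem_ball_self (half_pos hr))
  simp only [sub_zero] at hcauchy
  simp only [zpow_neg_one, hcauchy] at h
  have hM : resolventMoment a r (-1) =
      (2 * π * I : ℂ)⁻¹ • ∮ z in C(0, r), z⁻¹ • resolvent a z := by
    simp only [resolventMoment, zpow_neg_one]
  rwa [← resolventMoment_eq_of_le ha (half_pos hr) (half_lt_self hr).le hrε, mul_sub, mul_one,
    ← hM, sub_eq_self] at h

end ResolventMoment

section GDrazin

variable {A : Type*} [NormedRing A] [NormedAlgebra ℂ A] [CompleteSpace A]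

theorem isGDrazinInverse_neg_resolventMoment {a : A} {ε r : ℝ}
    (ha : ball (0 : ℂ) ε ∩ {0}ᶜ ⊆ resolventSet ℂ a) (hr : 0 < r) (hrε : r < ε) :
    IsGDrazinInverse a (-resolventMoment a r (-1)) := by
  set P := resolventMoment a r 0
  have hab : a * -resolventMoment a r (-1) = 1 - P := by
    rw [mul_neg, mul_resolventMoment_neg_one ha hr hrε, neg_sub]
  have hcomm : Commute a P := commute_resolventMoment ha hr hrε 0
  have hP : IsIdempotentElem P := resolventMoment_zero_mul_self ha hr hrε
  refine ⟨(commute_resolventMoment ha hr hrε (-1)).neg_right, ?_, ?_⟩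
  · rw [mul_assoc, hab, mul_sub, mul_one, neg_mul, resolventMoment_neg_one_mul_zero ha hr hrε,
      neg_zero, sub_zero]
  · rw [hab, sub_sub_cancel]
    refine spectralRadius_eq_zero_of_eventually_norm_pow_le ?_
    filter_upwards [Ioo_mem_nhdsGT hr] with ρ hρ
    obtain ⟨C, hC⟩ := exists_norm_resolventMoment_le ha hρ.1 (hρ.2.trans hrε)
    refine ⟨C, (eventually_ne_atTop 0).mono fun n hn => ?_⟩
    rw [hcomm.mul_pow, hP.pow_eq hn, pow_mul_resolventMoment_zero ha hr hrε,
      resolventMoment_eq_of_le ha hρ.1 hρ.2.le hrε]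
    exact hC n

theorem mem_resolventSet_of_isGDrazinInverse {a b : A} (h : IsGDrazinInverse a b) {z : ℂ}
    (hz : z ≠ 0) (hzb : ‖z • b‖ < 1) : z ∈ resolventSet ℂ a := by
  obtain ⟨hab, hbab, hqn⟩ := h
  set x := algebraMap ℂ A z - a
  set p := 1 - a * b
  have hp : IsIdempotentElem p := IsIdempotentElem.one_sub <| by
    rw [IsIdempotentElem, ← mul_assoc, mul_assoc a b a, mul_assoc, hbab]
  let U₁ : Aˣ := Units.oneSub (z • b) hzb
  obtain ⟨U₂, hU₂⟩ : IsUnit (algebraMap ℂ A z - a * p) :=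
    spectrum.mem_resolventSet_of_spectralRadius_lt (by rw [hqn]; exact_mod_cast nnnorm_pos.mpr hz)
  have hx_b : x * b = -(U₁ * (a * b)) := by
    simp only [x, U₁, Units.val_oneSub, Algebra.algebraMap_eq_smul_one, sub_mul, one_mul,
      smul_mul_assoc, ← mul_assoc, hbab, neg_sub]
  have hx_p : x * p = U₂ * p := by
    rw [hU₂, sub_mul, sub_mul, mul_assoc a p p, hp.eq]
  have hxa : Commute x a := (Algebra.commute_algebraMap_left z a).sub_left (Commute.refl a)
  have hxb : Commute x b := (Algebra.commute_algebraMap_left z b).sub_left hab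
  have hxp : Commute x p := (Commute.one_right x).sub_right (hxa.mul_right hxb)
  have hxU₁ : Commute x U₁ := (Commute.one_right x).sub_right (hxb.smul_right z)
  have hxU₂ : Commute x U₂ := by
    rw [hU₂]
    exact (Algebra.commute_algebraMap_right z x).sub_right (hxa.mul_right hxp)
  have hinv : x * (-(↑U₁⁻¹ * b) + ↑U₂⁻¹ * p) = 1 := by
    rw [mul_add, mul_neg, ← mul_assoc, ← mul_assoc, hxU₁.units_inv_right.eq,
      hxU₂.units_inv_right.eq, mul_assoc, mul_assoc, hx_b, hx_p, ← mul_assoc, ← mul_assoc,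
      mul_neg, ← mul_assoc]
    simp [p]
  have hcomm : Commute x (-(↑U₁⁻¹ * b) + ↑U₂⁻¹ * p) :=
    (hxU₁.units_inv_right.mul_right hxb).neg_right.add_right (hxU₂.units_inv_right.mul_right hxp)
  exact spectrum.mem_resolventSet_of_left_right_inverse hinv (hcomm.eq.symm.trans hinv)

theorem gDrazinInvertible_iff_eventually_mem_resolventSet {a : A} :
    GDrazinInvertible a ↔ ∀ᶠ z in 𝓝[≠] (0 : ℂ), z ∈ resolventSet ℂ a := by
  constructor
  · rintro ⟨b, hb⟩
    have hlim : Tendsto (fun z : ℂ => ‖z • b‖) (𝓝 0) (𝓝 0) := by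
      simpa using ((continuous_id (X := ℂ)).smul (continuous_const (y := b))).norm.tendsto 0
    filter_upwards [self_mem_nhdsWithin,
      nhdsWithin_le_nhds (hlim.eventually (gt_mem_nhds one_pos))] with z hz hzb
    exact mem_resolventSet_of_isGDrazinInverse hb hz hzb
  · intro h
    obtain ⟨ε, hε, hsub⟩ := Metric.mem_nhdsWithin_iff.mp h
    exact ⟨_, isGDrazinInverse_neg_resolventMoment hsub (half_pos hε) (half_lt_self hε)⟩

end GDrazin

lemma algebraMap_sub_mul_sub_mul_sub {R A : Type*} [CommRing R] [Ring A] [Algebra R A]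
    {x₁ x₂ x₃ : A} {α₁ α₂ β : R}
    (h1 : x₁ * x₂ + x₁ * x₃ + x₂ * x₃ = α₁ • (1 : A) + α₂ • (x₁ + x₂ + x₃))
    (h2 : x₁ * x₂ * x₃ = β • (x₁ + x₂ + x₃)) (z : R) :
    (algebraMap R A z - x₁) * ((algebraMap R A z - x₂) * (algebraMap R A z - x₃)) =
      algebraMap R A (z ^ 3 + α₁ * z) - (z ^ 2 - α₂ * z + β) • (x₁ + x₂ + x₃) := by
  have h : (algebraMap R A z - x₁) * ((algebraMap R A z - x₂) * (algebraMap R A z - x₃)) =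
      z ^ 3 • (1 : A) - z ^ 2 • (x₁ + x₂ + x₃) + z • (x₁ * x₂ + x₁ * x₃ + x₂ * x₃) -
        x₁ * x₂ * x₃ := by
    simp only [Algebra.algebraMap_eq_smul_one, mul_sub, sub_mul, smul_mul_assoc, mul_smul_comm,
      mul_one, one_mul, ← mul_assoc]
    module
  rw [h, h1, h2, Algebra.algebraMap_eq_smul_one]
  module

lemma tendsto_cubic_div_quadratic_nhdsNE {α₁ α₂ β : ℂ} (hβ : β ≠ 0) :
    Tendsto (fun z : ℂ => (z ^ 3 + α₁ * z) / (z ^ 2 - α₂ * z + β)) (𝓝[≠] 0) (𝓝[≠] 0) := by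
  have hq : ∀ᶠ z in 𝓝 (0 : ℂ), z ^ 2 - α₂ * z + β ≠ 0 :=
    (by fun_prop : Continuous fun z : ℂ => z ^ 2 - α₂ * z + β).continuousAt.eventually_ne
      (by simpa using hβ)
  have hnum : ∀ᶠ z in 𝓝[≠] (0 : ℂ), z ^ 3 + α₁ * z ≠ 0 := by
    rcases eq_or_ne α₁ 0 with rfl | hα₁
    · filter_upwards [self_mem_nhdsWithin] with z hz
      simpa using hz
    · have : ∀ᶠ z in 𝓝 (0 : ℂ), z ^ 2 + α₁ ≠ 0 :=
        (by fun_prop : Continuous fun z : ℂ => z ^ 2 + α₁).continuousAt.eventually_ne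
          (by simpa using hα₁)
      filter_upwards [self_mem_nhdsWithin, nhdsWithin_le_nhds this] with z hz hz'
      rw [show z ^ 3 + α₁ * z = z * (z ^ 2 + α₁) by ring]
      exact mul_ne_zero hz hz'
  refine tendsto_nhdsWithin_iff.mpr ⟨?_, ?_⟩
  · have hcont : ContinuousAt (fun z : ℂ => (z ^ 3 + α₁ * z) / (z ^ 2 - α₂ * z + β)) 0 :=
      ContinuousAt.div (by fun_prop) (by fun_prop) (by simpa using hβ)
    simpa using hcont.tendsto.mono_left nhdsWithin_le_nhds
  · filter_upwards [hnum, nhdsWithin_le_nhds hq] with z hz hqz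
    exact div_ne_zero hz hqz

theorem stmt_8 {A : Type*} [NormedRing A] [NormedAlgebra ℂ A] [CompleteSpace A]
    (x₁ x₂ x₃ : A) (α₁ α₂ β : ℂ) (hβ : β ≠ 0)
    (h1 : x₁ * x₂ + x₁ * x₃ + x₂ * x₃ = α₁ • (1 : A) + α₂ • (x₁ + x₂ + x₃))
    (h2 : x₁ * x₂ * x₃ = β • (x₁ + x₂ + x₃))
    (g1 : GDrazinInvertible x₁) (g2 : GDrazinInvertible x₂)
    (gs : GDrazinInvertible (x₁ + x₂ + x₃)) :
    GDrazinInvertible x₃ := by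
  rw [gDrazinInvertible_iff_eventually_mem_resolventSet] at g1 g2 gs ⊢
  have hq : ∀ᶠ z in 𝓝 (0 : ℂ), z ^ 2 - α₂ * z + β ≠ 0 :=
    (by fun_prop : Continuous fun z : ℂ => z ^ 2 - α₂ * z + β).continuousAt.eventually_ne
      (by simpa using hβ)
  filter_upwards [g1, g2, (tendsto_cubic_div_quadratic_nhdsNE hβ).eventually gs,
    nhdsWithin_le_nhds hq] with z ⟨u₁, hu₁⟩ ⟨u₂, hu₂⟩ hs hqz
  have key := algebraMap_sub_mul_sub_mul_sub h1 h2 z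
  rw [← mul_div_cancel₀ (z ^ 3 + α₁ * z) hqz, map_mul, Algebra.smul_def, ← mul_sub, ← hu₁,
    ← hu₂] at key
  refine spectrum.mem_resolventSet_iff.mpr <| (u₂.isUnit_units_mul _).mp <|
    (u₁.isUnit_units_mul _).mp ?_
  rw [key]
  exact ((isUnit_iff_ne_zero.mpr hqz).map _).mul hs
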